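/- Let G be a finite simple graph on m vertices and p ∈ [0,1]. The graph state of G after uniform dephasing with parameter p on every qubit — i.e. the matrix with entries 2^{−m}(−1)^{q(x)+q(y)}(2p−1)^{d(x,y)} — has von Neumann entropy equal to m·S̄(p). -/

import Mathlib

open Finset

/-- The field with two elements. -/
abbrev F2 : Type := ZMod 2

/-- Hamming weight of a bit string. -/
def hamW {ι : Type*} [Fintype ι] (x : ι → F2) : ℕ :=
  (Finset.univ.filter fun i => x i ≠ 0).card

/-- Hamming distance between bit strings. -/
def hamD {ι : Type*} [Fintype ι] (x y : ι → F2) : ℕ :=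
  (Finset.univ.filter fun i => x i ≠ y i).card

/-- `(-1)^c` for `c ∈ F_2`. -/
noncomputable def chr (c : F2) : ℂ := (-1 : ℂ) ^ c.val

/-- `q(x) = Σ_{{u,v} ∈ E} x_u x_v (mod 2)`. -/
def qform {V : Type*} [Fintype V] [DecidableEq V] (G : SimpleGraph V) [DecidableRel G.Adj]
    (x : V → F2) : F2 :=
  ∑ e ∈ G.edgeFinset, Sym2.lift ⟨fun u v => x u * x v, fun u v => mul_comm _ _⟩ e

/-- The graph state of `G` after uniform dephasing with parameter `p` on every qubit:
entries `2^{-m} (-1)^{q(x)+q(y)} (2p-1)^{d(x,y)}`. -/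
noncomputable def graphDeph {V : Type*} [Fintype V] [DecidableEq V] (G : SimpleGraph V)
    [DecidableRel G.Adj] (p : ℝ) : Matrix (V → F2) (V → F2) ℂ :=
  Matrix.of fun x y =>
    ((2 : ℂ) ^ Fintype.card V)⁻¹ * chr (qform G x + qform G y) *
      ((2 * p - 1 : ℝ) : ℂ) ^ hamD x y

/-- Binary entropy `S̄(p)`, base 2. -/
noncomputable def binEnt (p : ℝ) : ℝ := -(p * Real.logb 2 p) - (1 - p) * Real.logb 2 (1 - p)

/-- Shannon entropy (base 2) of a (finitely supported) real vector, with `0·log₂ 0 = 0`. -/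
noncomputable def shannonEnt {ι : Sort*} (q : ι → ℝ) : ℝ := -∑ᶠ i, q i * Real.logb 2 (q i)

/-- von Neumann entropy (base 2): the Shannon entropy of the eigenvalue vector. -/
noncomputable def vnEnt {n : Type*} [Fintype n] [DecidableEq n] {ρ : Matrix n n ℂ}
    (h : ρ.IsHermitian) : ℝ :=
  -∑ i, h.eigenvalues i * Real.logb 2 (h.eigenvalues i)

/-- The distribution induced on the coset space `M ⧸ K` by a weight `w` on `M`:
`c ↦ Σ_{v ∈ c} w(v)`. -/
noncomputable def synd {M : Type*} [AddCommGroup M] [Module F2 M] (K : Submodule F2 M)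
    (w : M → ℝ) (c : M ⧸ K) : ℝ :=
  ∑ᶠ v ∈ {v : M | (Submodule.Quotient.mk v : M ⧸ K) = c}, w v

/-! Dephasing commutes with the diagonal sign unitary `x ↦ (-1)^{q(x)}` that turns `|+⟩^{⊗m}`
into the graph state, so the dephased graph state is unitarily equivalent to the dephased
`|+⟩^{⊗m}` (the empty graph). The Walsh–Hadamard transform diagonalises the latter: the Walsh
transform of the product distribution `z ↦ ∏ᵢ w(zᵢ)`, with `w(0) = p` and `w(1) = 1 - p`, is
`(x, y) ↦ (2p - 1)^{d(x,y)}`, so its eigenvalues are these probabilities. The entropy of an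
i.i.d. product of `m` copies of `w` is `m` times the binary entropy `S̄(p)`. -/

open Matrix Polynomial

lemma F2.sum_univ {M : Type*} [AddCommMonoid M] (f : F2 → M) : ∑ c, f c = f 0 + f 1 :=
  Fin.sum_univ_two f

lemma F2.eq_zero_or_eq_one : ∀ c : F2, c = 0 ∨ c = 1 := by decide

lemma chr_zero : chr 0 = 1 := by simp [chr]

lemma chr_one : chr 1 = -1 := by simp [chr, ZMod.val_one]

lemma chr_add (a b : F2) : chr (a + b) = chr a * chr b := by
  rw [chr, chr, chr, ZMod.val_add, ← pow_add, ← neg_one_pow_eq_pow_mod_two]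

lemma chr_mul_self (a : F2) : chr a * chr a = 1 := by
  rw [← chr_add, CharTwo.add_self_eq_zero, chr_zero]

lemma chr_sum {ι : Type*} (s : Finset ι) (f : ι → F2) :
    chr (∑ i ∈ s, f i) = ∏ i ∈ s, chr (f i) := by
  induction s using Finset.cons_induction with
  | empty => simp [chr_zero]
  | cons a s ha ih => rw [sum_cons, prod_cons, chr_add, ih]

lemma prod_ite_add_eq_zero_eq_pow_hamD {V : Type*} [Fintype V] (x y : V → F2) (r : ℂ) :
    ∏ i, (if x i + y i = 0 then 1 else r) = r ^ hamD x y := by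
  simp only [prod_ite, prod_const_one, one_mul, prod_const, hamD, CharTwo.add_eq_zero]

section Walsh

variable {V : Type*} [Fintype V] [DecidableEq V]

lemma sum_chr_dotProduct_mul_prod (a : V → F2) (w : F2 → ℂ) :
    ∑ z : V → F2, chr (a ⬝ᵥ z) * ∏ i, w (z i) = ∏ i, (w 0 + chr (a i) * w 1) := by
  simp only [dotProduct, chr_sum, ← prod_mul_distrib]
  rw [← Fintype.prod_sum (fun i c => chr (a i * c) * w c)]
  simp [F2.sum_univ, chr_zero]

lemma sum_chr_dotProduct (a : V → F2) :
    ∑ z : V → F2, chr (a ⬝ᵥ z) = if a = 0 then (2 : ℂ) ^ Fintype.card V else 0 := by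
  have h := sum_chr_dotProduct_mul_prod a 1
  simp only [Pi.one_apply, prod_const_one, mul_one] at h
  have hfactor (c : F2) : 1 + chr c = if c = 0 then 2 else 0 := by
    rcases F2.eq_zero_or_eq_one c with rfl | rfl <;> norm_num [chr_zero, chr_one]
  simp only [h, hfactor, prod_ite_zero, prod_const, card_univ, mem_univ, true_implies,
    funext_iff, Pi.zero_apply]

noncomputable def walsh : Matrix (V → F2) (V → F2) ℂ := of fun x z => chr (x ⬝ᵥ z)

lemma walsh_mul_walsh : (walsh : Matrix (V → F2) (V → F2) ℂ) * walsh =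
    (2 : ℂ) ^ Fintype.card V • 1 := by
  ext x y
  simp only [walsh, mul_apply, of_apply, ← chr_add, dotProduct_comm _ y, ← add_dotProduct,
    sum_chr_dotProduct, add_eq_zero_iff_eq_neg, ZModModule.neg_eq_self, Matrix.smul_apply,
    one_apply, smul_eq_mul, mul_ite, mul_one, mul_zero]

end Walsh

noncomputable def dephasingWeight (p : ℝ) (c : F2) : ℝ := if c = 0 then p else 1 - p

section GraphState

variable {V : Type*} [Fintype V] [DecidableEq V]

lemma dephasingWeight_add_chr_mul (p : ℝ) (c : F2) :
    (dephasingWeight p 0 : ℂ) + chr c * dephasingWeight p 1 =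
      if c = 0 then 1 else ((2 * p - 1 : ℝ) : ℂ) := by
  rcases F2.eq_zero_or_eq_one c with rfl | rfl
  · simp [dephasingWeight, chr_zero]
  · simp only [dephasingWeight, chr_one, ↓reduceIte, one_ne_zero]
    push_cast
    ring

lemma qform_bot (x : V → F2) : qform (⊥ : SimpleGraph V) x = 0 :=
  sum_eq_zero fun e he => by simp at he

lemma graphDeph_bot_eq_walsh_conj (p : ℝ) :
    graphDeph (⊥ : SimpleGraph V) p =
      walsh * diagonal (fun z => ((∏ i, dephasingWeight p (z i) : ℝ) : ℂ)) *
        (((2 : ℂ) ^ Fintype.card V)⁻¹ • walsh) := by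
  ext x y
  have hsum := sum_chr_dotProduct_mul_prod (x + y) (fun c => (dephasingWeight p c : ℂ))
  simp only [Pi.add_apply, dephasingWeight_add_chr_mul, prod_ite_add_eq_zero_eq_pow_hamD] at hsum
  rw [mul_apply]
  simp only [graphDeph, walsh, qform_bot, add_zero, chr_zero, mul_one, mul_diagonal,
    Matrix.smul_apply, of_apply, smul_eq_mul, ← hsum, add_dotProduct, chr_add, dotProduct_comm y,
    mul_sum, Complex.ofReal_prod]
  refine sum_congr rfl fun z _ => ?_
  ring

noncomputable def graphSign (G : SimpleGraph V) [DecidableRel G.Adj] :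
    Matrix (V → F2) (V → F2) ℂ :=
  diagonal fun x => chr (qform G x)

lemma graphSign_mul_self (G : SimpleGraph V) [DecidableRel G.Adj] :
    graphSign G * graphSign G = 1 := by
  simp only [graphSign, diagonal_mul_diagonal, chr_mul_self, diagonal_one]

lemma graphDeph_eq_graphSign_conj (G : SimpleGraph V) [DecidableRel G.Adj] (p : ℝ) :
    graphDeph G p = graphSign G * graphDeph ⊥ p * graphSign G := by
  ext x y
  simp only [graphDeph, graphSign, qform_bot, add_zero, chr_zero, mul_one, diagonal_mul,
    mul_diagonal, of_apply, chr_add]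
  ring

end GraphState

lemma Matrix.charpoly_mul_mul_of_mul_eq_one {n R : Type*} [Fintype n] [DecidableEq n]
    [CommRing R] {P Q : Matrix n n R} (h : P * Q = 1) (N : Matrix n n R) :
    (P * N * Q).charpoly = N.charpoly := by
  rw [charpoly_mul_comm, ← Matrix.mul_assoc, mul_eq_one_comm.mp h, Matrix.one_mul]

lemma charpoly_graphDeph {V : Type*} [Fintype V] [DecidableEq V] (G : SimpleGraph V)
    [DecidableRel G.Adj] (p : ℝ) :
    (graphDeph G p).charpoly =
      ∏ z : V → F2, (X - C ((∏ i, dephasingWeight p (z i) : ℝ) : ℂ)) := by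
  have hwalsh : (walsh : Matrix (V → F2) (V → F2) ℂ) *
      (((2 : ℂ) ^ Fintype.card V)⁻¹ • walsh) = 1 := by
    rw [Matrix.mul_smul, walsh_mul_walsh, smul_smul, inv_mul_cancel₀ (by norm_num), one_smul]
  rw [graphDeph_eq_graphSign_conj, charpoly_mul_mul_of_mul_eq_one (graphSign_mul_self G),
    graphDeph_bot_eq_walsh_conj, charpoly_mul_mul_of_mul_eq_one hwalsh, charpoly_diagonal]

lemma Matrix.IsHermitian.sum_comp_eigenvalues_eq {𝕜 n ι : Type*} [RCLike 𝕜] [Fintype n]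
    [DecidableEq n] [Fintype ι] {A : Matrix n n 𝕜} (hA : A.IsHermitian) {d : ι → ℝ}
    (h : A.charpoly = ∏ j, (X - C (d j : 𝕜))) (F : ℝ → ℝ) :
    ∑ i, F (hA.eigenvalues i) = ∑ j, F (d j) := by
  have hroots := hA.roots_charpoly_eq_eigenvalues
  rw [h, roots_prod _ _ (prod_ne_zero_iff.mpr fun j _ => X_sub_C_ne_zero _)] at hroots
  simp only [roots_X_sub_C, Multiset.bind_singleton] at hroots
  simp only [sum_eq_multiset_sum]
  convert congrArg (fun s => (s.map (F ∘ RCLike.re)).sum) hroots.symm using 1 <;>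
    simp [Multiset.map_map]

lemma sum_pi_prod_mul_apply {ι α R : Type*} [Fintype ι] [DecidableEq ι] [Fintype α]
    [CommSemiring R] (w g : α → R) (hw : ∑ a, w a = 1) (i : ι) :
    ∑ z : ι → α, (∏ j, w (z j)) * g (z i) = ∑ a, w a * g a := by
  have hprod (z : ι → α) :
      (∏ j, w (z j)) * g (z i) = ∏ j, (w (z j) * if j = i then g (z j) else 1) := by
    rw [prod_mul_distrib, Fintype.prod_ite_eq']
  have hfactor (j : ι) :
      ∑ a, w a * (if j = i then g a else 1) = if j = i then ∑ a, w a * g a else 1 := by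
    split_ifs <;> simp [hw]
  simp only [hprod, ← Fintype.prod_sum (fun j a => w a * if j = i then g a else 1), hfactor,
    Fintype.prod_ite_eq']

lemma sum_pi_prod_mul_logb_prod {ι α : Type*} [Fintype ι] [DecidableEq ι] [Fintype α]
    (w : α → ℝ) (hw : ∑ a, w a = 1) (b : ℝ) :
    ∑ z : ι → α, (∏ i, w (z i)) * Real.logb b (∏ i, w (z i)) =
      Fintype.card ι * ∑ a, w a * Real.logb b (w a) := by
  have hsplit (z : ι → α) : (∏ i, w (z i)) * Real.logb b (∏ i, w (z i)) =
      ∑ i, (∏ j, w (z j)) * Real.logb b (w (z i)) := by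
    by_cases hz : ∀ i, w (z i) ≠ 0
    · rw [Real.logb_prod _ _ fun i _ => hz i, mul_sum]
    · obtain ⟨i, hi⟩ := not_forall_not.mp hz
      simp [prod_eq_zero (f := fun j => w (z j)) (mem_univ i) hi]
  simp only [hsplit]
  rw [sum_comm]
  simp [sum_pi_prod_mul_apply w (fun a => Real.logb b (w a)) hw]

theorem entropy_dephased_graph_state_general (m : ℕ) (G : SimpleGraph (Fin m)) [DecidableRel G.Adj]
    (p : ℝ) (hherm : (graphDeph G p).IsHermitian) :
    vnEnt hherm = m * binEnt p := by
  have hw : ∑ c, dephasingWeight p c = 1 := by simp [F2.sum_univ, dephasingWeight]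
  have hsite : ∑ c, dephasingWeight p c * Real.logb 2 (dephasingWeight p c) = -binEnt p := by
    simp only [F2.sum_univ, dephasingWeight, binEnt, ↓reduceIte, one_ne_zero]
    ring
  rw [vnEnt, hherm.sum_comp_eigenvalues_eq
      (d := fun z : Fin m → F2 => ∏ i, dephasingWeight p (z i))
      (charpoly_graphDeph G p) (fun t => t * Real.logb 2 t),
    sum_pi_prod_mul_logb_prod _ hw, hsite, Fintype.card_fin]
  ring

/-- The graph state of a graph on `m` vertices after uniform dephasing with parameter `p` on
every qubit has von Neumann entropy `m · S̄(p)`. -/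
theorem entropy_dephased_graph_state (m : ℕ) (G : SimpleGraph (Fin m)) [DecidableRel G.Adj]
    (p : ℝ) (hp : p ∈ Set.Icc (0 : ℝ) 1)
    (hherm : (graphDeph G p).IsHermitian) :
    vnEnt hherm = m * binEnt p :=
  entropy_dephased_graph_state_general m G p hherm
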